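/- arXiv:1806.10586 — 4 statements merged into one kernel-verified Lean document; each statement's English description precedes it below -/
import Mathlib

section
/- For all z, z̃ ∈ ℝ^{n_0}, the generator satisfies the quantitative bijectivity bound ‖G(z) − G(z̃)‖ ≥ (1/L_σ^l) · (∏_{i=1}^l s_i) · ‖z − z̃‖. -/
/-!
Each layer loses at most a factor `Lσ / sᵢ`: the pre-activations of two inputs are at least
`sᵢ` times their distance apart, and applying `σ` coordinatewise shrinks every coordinate gap
by at most `Lσ`, since `σ⁻¹` is `Lσ`-Lipschitz. Chaining the `l` layers gives the bound.
-/

/-- View a plain vector as an element of Euclidean space (ℓ² norm). -/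
noncomputable def toE {m : ℕ} (v : Fin m → ℝ) : EuclideanSpace ℝ (Fin m) :=
  (WithLp.equiv 2 _).symm v

lemma toE_sub {m : ℕ} (u v : Fin m → ℝ) : toE (u - v) = toE u - toE v := rfl

lemma norm_toE_le_of_abs_le {m : ℕ} {u v : Fin m → ℝ} {c : ℝ} (hc : 0 ≤ c)
    (huv : ∀ j, |u j| ≤ c * |v j|) : ‖toE u‖ ≤ c * ‖toE v‖ := by
  have hsq : ‖toE u‖ ^ 2 ≤ (c * ‖toE v‖) ^ 2 := by
    rw [mul_pow, EuclideanSpace.norm_sq_eq, EuclideanSpace.norm_sq_eq, Finset.mul_sum]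
    gcongr with j
    rw [← mul_pow]
    exact pow_le_pow_left₀ (norm_nonneg _) (huv j) 2
  exact (pow_le_pow_iff_left₀ (norm_nonneg _) (by positivity) two_ne_zero).mp hsq

noncomputable def layer {m k : ℕ} (σ : ℝ → ℝ) (W : Matrix (Fin k) (Fin m) ℝ) (b : Fin k → ℝ)
    (x : EuclideanSpace ℝ (Fin m)) : EuclideanSpace ℝ (Fin k) :=
  toE fun j => σ (W.mulVec x j + b j)

lemma norm_mulVec_sub_le_mul_norm_layer_sub {m k : ℕ} {σ : ℝ → ℝ} {L : ℝ} (hL : 0 ≤ L)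
    (hσ : ∀ x y : ℝ, |x - y| ≤ L * |σ x - σ y|) (W : Matrix (Fin k) (Fin m) ℝ)
    (b : Fin k → ℝ) (x y : EuclideanSpace ℝ (Fin m)) :
    ‖toE (W.mulVec (x - y))‖ ≤ L * ‖layer σ W b x - layer σ W b y‖ := by
  rw [layer, layer, ← toE_sub]
  refine norm_toE_le_of_abs_le hL fun j => ?_
  simpa [Matrix.mulVec_sub] using hσ (W.mulVec x j + b j) (W.mulVec y j + b j)

lemma prod_mul_le_pow_mul_of_forall_lt {s d : ℕ → ℝ} {L : ℝ} {l : ℕ}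
    (hs : ∀ i < l, 0 ≤ s i) (hL : 0 ≤ L) (hd : ∀ i < l, s i * d i ≤ L * d (i + 1)) :
    (∏ i ∈ Finset.range l, s i) * d 0 ≤ L ^ l * d l := by
  induction l with
  | zero => simp
  | succ k ih =>
    have hk := ih (fun i hi => hs i (by omega)) (fun i hi => hd i (by omega))
    calc (∏ i ∈ Finset.range (k + 1), s i) * d 0
        = s k * ((∏ i ∈ Finset.range k, s i) * d 0) := by rw [Finset.prod_range_succ]; ring
      _ ≤ s k * (L ^ k * d k) := mul_le_mul_of_nonneg_left hk (hs k k.lt_succ_self)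
      _ = L ^ k * (s k * d k) := by ring
      _ ≤ L ^ k * (L * d (k + 1)) :=
          mul_le_mul_of_nonneg_left (hd k k.lt_succ_self) (by positivity)
      _ = L ^ (k + 1) * d (k + 1) := by ring

theorem quantitative_bijectivity_general
    (l : ℕ) (n : ℕ → ℕ)
    (W : (i : ℕ) → Matrix (Fin (n (i + 1))) (Fin (n i)) ℝ)
    (b : (i : ℕ) → Fin (n (i + 1)) → ℝ)
    (σ : ℝ → ℝ) (Lσ : ℝ) (hLσ : 0 < Lσ)
    (hσinv : ∀ x y : ℝ, |x - y| ≤ Lσ * |σ x - σ y|)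
    (s : ℕ → ℝ) (hs : ∀ i, i < l → 0 < s i)
    (hW : ∀ i, i < l → ∀ v : EuclideanSpace ℝ (Fin (n i)),
      ‖toE ((W i).mulVec v)‖ ≥ s i * ‖v‖)
    (z zt : EuclideanSpace ℝ (Fin (n 0)))
    (h ht : (i : ℕ) → EuclideanSpace ℝ (Fin (n i)))
    (h0 : h 0 = z) (ht0 : ht 0 = zt)
    (hrec : ∀ i, i < l → h (i + 1) = toE (fun j => σ ((W i).mulVec (h i) j + b i j)))
    (htrec : ∀ i, i < l → ht (i + 1) = toE (fun j => σ ((W i).mulVec (ht i) j + b i j))) :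
    ‖h l - ht l‖ ≥ (1 / Lσ ^ l) * (∏ i ∈ Finset.range l, s i) * ‖z - zt‖ := by
  have hstep : ∀ i < l, s i * ‖h i - ht i‖ ≤ Lσ * ‖h (i + 1) - ht (i + 1)‖ := by
    intro i hi
    rw [hrec i hi, htrec i hi]
    exact (hW i hi _).trans
      (norm_mulVec_sub_le_mul_norm_layer_sub hLσ.le hσinv (W i) (b i) (h i) (ht i))
  have hchain := prod_mul_le_pow_mul_of_forall_lt (fun i hi => (hs i hi).le) hLσ.le hstep
  rw [h0, ht0] at hchain
  rw [ge_iff_le, mul_assoc, one_div_mul_eq_div, div_le_iff₀' (pow_pos hLσ l)]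
  exact hchain

theorem quantitative_bijectivity
    (l : ℕ) (hl : 1 ≤ l) (n : ℕ → ℕ)
    (W : (i : ℕ) → Matrix (Fin (n (i + 1))) (Fin (n i)) ℝ)
    (b : (i : ℕ) → Fin (n (i + 1)) → ℝ)
    (σ : ℝ → ℝ) (Lσ : ℝ) (hLσ : 0 < Lσ)
    (hσbij : Function.Bijective σ)
    (hσinv : ∀ x y : ℝ, |x - y| ≤ Lσ * |σ x - σ y|)
    (s : ℕ → ℝ) (hs : ∀ i, i < l → 0 < s i)
    (hW : ∀ i, i < l → ∀ v : EuclideanSpace ℝ (Fin (n i)),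
      ‖toE ((W i).mulVec v)‖ ≥ s i * ‖v‖)
    (z zt : EuclideanSpace ℝ (Fin (n 0)))
    (h ht : (i : ℕ) → EuclideanSpace ℝ (Fin (n i)))
    (h0 : h 0 = z) (ht0 : ht 0 = zt)
    (hrec : ∀ i, i < l → h (i + 1) = toE (fun j => σ ((W i).mulVec (h i) j + b i j)))
    (htrec : ∀ i, i < l → ht (i + 1) = toE (fun j => σ ((W i).mulVec (ht i) j + b i j))) :
    ‖h l - ht l‖ ≥ (1 / Lσ ^ l) * (∏ i ∈ Finset.range l, s i) * ‖z - zt‖ :=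
  quantitative_bijectivity_general l n W b σ Lσ hLσ hσinv s hs hW z zt h ht h0 ht0 hrec htrec
end

section
/- Suppose z ∈ ℝ^{n_0} and x ∈ ℝ^{n_l} satisfy ‖G(z) − x‖ ≤ ε. Define an approximate inversion sequence by ĥ_l = x and, for i = l, l−1, …, 1, let ĥ_{i−1} be any global minimizer over h ∈ ℝ^{n_{i−1}} of ‖W_i h + b_i − σ⁻¹(ĥ_i)‖, where σ⁻¹ is applied coordinatewise (assume such minimizers exist). Then for every i ∈ {0,…,l}, ‖ĥ_i − h_i(z)‖ ≤ ε · (2 L_σ)^{l−i} · ∏_{j=i+1}^{l} s_j^{−1}; in particular the recovered latent point ẑ = ĥ_0 satisfies ‖ẑ − z‖ ≤ ε · 2^l L_σ^l · ∏_{j=1}^{l} s_j^{−1}. -/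
/-!
Inverting one layer loses at most a factor `2 L_σ / s`. The true preimage `h_{i-1}(z)` is a
competitor in the least-squares problem solved by `ĥ_{i-1}`, and its residual
`σ⁻¹(h_i(z)) - σ⁻¹(ĥ_i)` has norm at most `L_σ ‖ĥ_i - h_i(z)‖`. Since the minimizer's residual is
no larger, `W_i (ĥ_{i-1} - h_{i-1}(z))`, the difference of the two residuals, has norm at most
twice that, and the lower bound `s_i` on `W_i` converts this into a bound on
`‖ĥ_{i-1} - h_{i-1}(z)‖`. Iterating from `‖ĥ_l - h_l(z)‖ ≤ ε` gives the claim.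
-/

open scoped NNReal

lemma EuclideanSpace.norm_toLp_comp_sub_toLp_comp_le {ι : Type*} [Fintype ι] {f : ℝ → ℝ}
    {K : ℝ≥0} (hf : LipschitzWith K f) (a b : EuclideanSpace ℝ ι) :
    ‖WithLp.toLp 2 (fun j => f (a j)) - WithLp.toLp 2 (fun j => f (b j))‖ ≤ K * ‖a - b‖ := by
  have hsq : ‖WithLp.toLp 2 (fun j => f (a j)) - WithLp.toLp 2 (fun j => f (b j))‖ ^ 2
      ≤ (K * ‖a - b‖) ^ 2 := by
    rw [mul_pow, EuclideanSpace.norm_sq_eq, EuclideanSpace.norm_sq_eq, Finset.mul_sum]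
    gcongr with j
    rw [← mul_pow]
    gcongr
    exact hf.dist_le_mul (a j) (b j)
  exact (pow_le_pow_iff_left₀ (norm_nonneg _) (by positivity) two_ne_zero).mp hsq

lemma mul_norm_sub_le_two_mul_norm_of_norm_le {E F : Type*} [SeminormedAddCommGroup E]
    [SeminormedAddCommGroup F] (f : E →+ F) {s : ℝ} (hf : ∀ v, s * ‖v‖ ≤ ‖f v‖) (c : F)
    {xhat x : E} (hmin : ‖f xhat + c‖ ≤ ‖f x + c‖) :
    s * ‖xhat - x‖ ≤ 2 * ‖f x + c‖ :=
  calc s * ‖xhat - x‖ ≤ ‖f (xhat - x)‖ := hf _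
    _ = ‖(f xhat + c) - (f x + c)‖ := by rw [map_sub, add_sub_add_right_eq_sub]
    _ ≤ ‖f xhat + c‖ + ‖f x + c‖ := norm_sub_le _ _
    _ ≤ 2 * ‖f x + c‖ := by linarith

lemma norm_sub_le_of_layer_minimizer {m k : ℕ} (W : Matrix (Fin m) (Fin k) ℝ) (c : Fin m → ℝ)
    {σ τ : ℝ → ℝ} (hτσ : ∀ t, τ (σ t) = t) {K : ℝ≥0} (hτ : LipschitzWith K τ) {s : ℝ}
    (hW : ∀ v : EuclideanSpace ℝ (Fin k), ‖toE (W.mulVec v)‖ ≥ s * ‖v‖)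
    {u uhat : EuclideanSpace ℝ (Fin k)} {y yhat : EuclideanSpace ℝ (Fin m)}
    (hy : y = toE (fun j => σ (W.mulVec u j + c j)))
    (hmin : ∀ v : EuclideanSpace ℝ (Fin k),
      ‖toE (W.mulVec uhat) + toE c - toE (fun j => τ (yhat j))‖
        ≤ ‖toE (W.mulVec v) + toE c - toE (fun j => τ (yhat j))‖) :
    s * ‖uhat - u‖ ≤ 2 * K * ‖yhat - y‖ := by
  have hresidual : toE (W.mulVec u) + toE c = toE (fun j => τ (y j)) := by
    ext j
    simp [hy, toE, hτσ]
  simp only [add_sub_assoc] at hmin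
  calc s * ‖uhat - u‖ ≤ 2 * ‖toE (W.mulVec u) + (toE c - toE (fun j => τ (yhat j)))‖ :=
        mul_norm_sub_le_two_mul_norm_of_norm_le (Matrix.toLpLin 2 2 W).toAddMonoidHom hW _
          (hmin u)
    _ = 2 * ‖toE (fun j => τ (y j)) - toE (fun j => τ (yhat j))‖ := by
        rw [← add_sub_assoc, hresidual]
    _ ≤ 2 * (K * ‖y - yhat‖) :=
        mul_le_mul_of_nonneg_left
          (EuclideanSpace.norm_toLp_comp_sub_toLp_comp_le hτ y yhat) zero_le_two
    _ = 2 * K * ‖yhat - y‖ := by rw [norm_sub_rev, mul_assoc]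

lemma le_mul_pow_mul_prod_inv_of_mul_le_mul_succ {e s : ℕ → ℝ} {c ε : ℝ} {l : ℕ} (hc : 0 ≤ c)
    (hs : ∀ i < l, 0 < s i) (hstep : ∀ i < l, s i * e i ≤ c * e (i + 1)) (hl : e l ≤ ε)
    {i : ℕ} (hi : i ≤ l) :
    e i ≤ ε * c ^ (l - i) * ∏ j ∈ Finset.Ico i l, (s j)⁻¹ := by
  induction hi using Nat.decreasingInduction with
  | self => simpa using hl
  | of_succ k hk ih =>
    calc e k ≤ (s k)⁻¹ * (c * e (k + 1)) := by rw [le_inv_mul_iff₀ (hs k hk)]; exact hstep k hk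
      _ ≤ (s k)⁻¹ * (c * (ε * c ^ (l - (k + 1)) * ∏ j ∈ Finset.Ico (k + 1) l, (s j)⁻¹)) := by
          gcongr
          exact (inv_pos.mpr (hs k hk)).le
      _ = ε * c ^ (l - k) * ∏ j ∈ Finset.Ico k l, (s j)⁻¹ := by
          rw [Finset.prod_eq_prod_Ico_succ_bot hk, show l - k = l - (k + 1) + 1 by omega]
          ring

theorem approximate_inversion_general
    (l : ℕ) (n : ℕ → ℕ)
    (W : (i : ℕ) → Matrix (Fin (n (i + 1))) (Fin (n i)) ℝ)
    (b : (i : ℕ) → Fin (n (i + 1)) → ℝ)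
    (σ τ : ℝ → ℝ) (Lσ : ℝ) (hLσ : 0 < Lσ)
    (hτσ : ∀ t : ℝ, τ (σ t) = t)
    (hτlip : ∀ x y : ℝ, |τ x - τ y| ≤ Lσ * |x - y|)
    (s : ℕ → ℝ) (hs : ∀ i, i < l → 0 < s i)
    (hW : ∀ i, i < l → ∀ v : EuclideanSpace ℝ (Fin (n i)),
      ‖toE ((W i).mulVec v)‖ ≥ s i * ‖v‖)
    (z : EuclideanSpace ℝ (Fin (n 0)))
    (h : (i : ℕ) → EuclideanSpace ℝ (Fin (n i)))
    (h0 : h 0 = z)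
    (hrec : ∀ i, i < l → h (i + 1) = toE (fun j => σ ((W i).mulVec (h i) j + b i j)))
    (x : EuclideanSpace ℝ (Fin (n l))) (ε : ℝ)
    (hx : ‖h l - x‖ ≤ ε)
    (hhat : (i : ℕ) → EuclideanSpace ℝ (Fin (n i)))
    (hhhatl : hhat l = x)
    (hmin : ∀ i, i < l → ∀ u : EuclideanSpace ℝ (Fin (n i)),
      ‖toE ((W i).mulVec (hhat i)) + toE (b i) - toE (fun j => τ (hhat (i + 1) j))‖
        ≤ ‖toE ((W i).mulVec u) + toE (b i) - toE (fun j => τ (hhat (i + 1) j))‖) :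
    (∀ i, i ≤ l →
        ‖hhat i - h i‖ ≤ ε * (2 * Lσ) ^ (l - i) * ∏ j ∈ Finset.Ico i l, (s j)⁻¹) ∧
      ‖hhat 0 - z‖ ≤ ε * 2 ^ l * Lσ ^ l * ∏ j ∈ Finset.range l, (s j)⁻¹ := by
  have hτ : LipschitzWith ⟨Lσ, hLσ.le⟩ τ :=
    LipschitzWith.of_dist_le_mul fun x y => by
      rw [Real.dist_eq, Real.dist_eq]; exact hτlip x y
  have bound : ∀ i, i ≤ l →
      ‖hhat i - h i‖ ≤ ε * (2 * Lσ) ^ (l - i) * ∏ j ∈ Finset.Ico i l, (s j)⁻¹ :=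
    fun i hi => le_mul_pow_mul_prod_inv_of_mul_le_mul_succ (by positivity) hs
      (fun k hk => norm_sub_le_of_layer_minimizer (W k) (b k) hτσ hτ (hW k hk) (hrec k hk)
        (hmin k hk))
      (by rw [hhhatl, norm_sub_rev]; exact hx) hi
  refine ⟨bound, ?_⟩
  have hz := bound 0 l.zero_le
  rwa [h0, Nat.sub_zero, mul_pow, ← mul_assoc, ← Finset.range_eq_Ico] at hz

theorem approximate_inversion
    (l : ℕ) (hl : 1 ≤ l) (n : ℕ → ℕ)
    (W : (i : ℕ) → Matrix (Fin (n (i + 1))) (Fin (n i)) ℝ)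
    (b : (i : ℕ) → Fin (n (i + 1)) → ℝ)
    (σ τ : ℝ → ℝ) (Lσ : ℝ) (hLσ : 0 < Lσ)
    (hτσ : ∀ t : ℝ, τ (σ t) = t) (hστ : ∀ t : ℝ, σ (τ t) = t)
    (hτlip : ∀ x y : ℝ, |τ x - τ y| ≤ Lσ * |x - y|)
    (s : ℕ → ℝ) (hs : ∀ i, i < l → 0 < s i)
    (hW : ∀ i, i < l → ∀ v : EuclideanSpace ℝ (Fin (n i)),
      ‖toE ((W i).mulVec v)‖ ≥ s i * ‖v‖)
    (z : EuclideanSpace ℝ (Fin (n 0)))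
    (h : (i : ℕ) → EuclideanSpace ℝ (Fin (n i)))
    (h0 : h 0 = z)
    (hrec : ∀ i, i < l → h (i + 1) = toE (fun j => σ ((W i).mulVec (h i) j + b i j)))
    (x : EuclideanSpace ℝ (Fin (n l))) (ε : ℝ)
    (hx : ‖h l - x‖ ≤ ε)
    (hhat : (i : ℕ) → EuclideanSpace ℝ (Fin (n i)))
    (hhhatl : hhat l = x)
    (hmin : ∀ i, i < l → ∀ u : EuclideanSpace ℝ (Fin (n i)),
      ‖toE ((W i).mulVec (hhat i)) + toE (b i) - toE (fun j => τ (hhat (i + 1) j))‖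
        ≤ ‖toE ((W i).mulVec u) + toE (b i) - toE (fun j => τ (hhat (i + 1) j))‖) :
    (∀ i, i ≤ l →
        ‖hhat i - h i‖ ≤ ε * (2 * Lσ) ^ (l - i) * ∏ j ∈ Finset.Ico i l, (s j)⁻¹) ∧
      ‖hhat 0 - z‖ ≤ ε * 2 ^ l * Lσ ^ l * ∏ j ∈ Finset.range l, (s j)⁻¹ :=
  approximate_inversion_general l n W b σ τ Lσ hLσ hτσ hτlip s hs hW z h h0 hrec x ε hx hhat hhhatl
    hmin
end

section
/- Let W be a real m×n matrix with ‖W v‖ ≥ s‖v‖ for all v ∈ ℝ^n (s > 0), b ∈ ℝ^m, and let σ : ℝ → ℝ be a bijection whose inverse is L-Lipschitz: |σ⁻¹(x) − σ⁻¹(y)| ≤ L|x − y| for all x, y. Suppose h, ĥ ∈ ℝ^m satisfy ‖ĥ − h‖ ≤ δ and h = σ(W h' + b) coordinatewise for some h' ∈ ℝ^n. If h̃ ∈ ℝ^n is a global minimizer of u ↦ ‖W u + b − σ⁻¹(ĥ)‖ (σ⁻¹ applied coordinatewise), then ‖h̃ − h'‖ ≤ 2 L δ / s. -/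
theorem mul_norm_sub_le_two_mul_norm_of_minimizer {E F : Type*} [SeminormedAddCommGroup E]
    [SeminormedAddCommGroup F] {r : E → F} {s : ℝ} (hr : ∀ u v, s * ‖u - v‖ ≤ ‖r u - r v‖)
    {x x' : E} (hmin : ∀ u, ‖r x'‖ ≤ ‖r u‖) :
    s * ‖x' - x‖ ≤ 2 * ‖r x‖ :=
  calc s * ‖x' - x‖ ≤ ‖r x' - r x‖ := hr x' x
    _ ≤ ‖r x'‖ + ‖r x‖ := norm_sub_le _ _
    _ ≤ 2 * ‖r x‖ := by linarith [hmin x]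

theorem EuclideanSpace.norm_le_mul_norm_of_abs_le {ι : Type*} [Fintype ι] {L : ℝ} (hL : 0 ≤ L)
    {x y : EuclideanSpace ℝ ι} (h : ∀ i, |x i| ≤ L * |y i|) : ‖x‖ ≤ L * ‖y‖ := by
  rw [EuclideanSpace.norm_eq, EuclideanSpace.norm_eq, ← Real.sqrt_sq hL,
    ← Real.sqrt_mul (sq_nonneg L), Finset.mul_sum]
  gcongr with i
  simpa only [Real.norm_eq_abs, mul_pow] using pow_le_pow_left₀ (abs_nonneg _) (h i) 2

theorem inversion_step_general
    (m n : ℕ) (W : Matrix (Fin m) (Fin n) ℝ) (b : Fin m → ℝ)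
    (s L δ : ℝ) (hs : 0 < s) (hL : 0 < L)
    (hW : ∀ v : EuclideanSpace ℝ (Fin n), ‖toE (W.mulVec v)‖ ≥ s * ‖v‖)
    (σ τ : ℝ → ℝ)
    (hτσ : ∀ t : ℝ, τ (σ t) = t)
    (hτlip : ∀ x y : ℝ, |τ x - τ y| ≤ L * |x - y|)
    (h hhat : EuclideanSpace ℝ (Fin m)) (h' : EuclideanSpace ℝ (Fin n))
    (hclose : ‖hhat - h‖ ≤ δ)
    (hlayer : h = toE (fun j => σ (W.mulVec h' j + b j)))
    (htilde : EuclideanSpace ℝ (Fin n))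
    (hmin : ∀ u : EuclideanSpace ℝ (Fin n),
      ‖toE (W.mulVec htilde) + toE b - toE (fun j => τ (hhat j))‖
        ≤ ‖toE (W.mulVec u) + toE b - toE (fun j => τ (hhat j))‖) :
    ‖htilde - h'‖ ≤ 2 * L * δ / s := by
  set r : EuclideanSpace ℝ (Fin n) → EuclideanSpace ℝ (Fin m) :=
    fun u => toE (W.mulVec u) + toE b - toE (fun j => τ (hhat j))
  have hr : ∀ u v, s * ‖u - v‖ ≤ ‖r u - r v‖ := fun u v => by
    have : r u - r v = Matrix.toEuclideanLin W (u - v) := by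
      simp only [r, map_sub]
      abel
    exact this ▸ hW (u - v)
  have hr_true : r h' = toE (fun j => τ (h j) - τ (hhat j)) := by
    ext j
    simp [r, toE, hlayer, hτσ]
  have hresidual : ‖r h'‖ ≤ L * δ := by
    rw [hr_true]
    calc _ ≤ L * ‖h - hhat‖ := EuclideanSpace.norm_le_mul_norm_of_abs_le hL.le fun j => hτlip _ _
      _ ≤ L * δ := by rw [norm_sub_rev] at hclose; gcongr
  rw [le_div_iff₀ hs]
  linarith [mul_norm_sub_le_two_mul_norm_of_minimizer hr hmin (x := h')]

theorem inversion_step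
    (m n : ℕ) (W : Matrix (Fin m) (Fin n) ℝ) (b : Fin m → ℝ)
    (s L δ : ℝ) (hs : 0 < s) (hL : 0 < L)
    (hW : ∀ v : EuclideanSpace ℝ (Fin n), ‖toE (W.mulVec v)‖ ≥ s * ‖v‖)
    (σ τ : ℝ → ℝ)
    (hτσ : ∀ t : ℝ, τ (σ t) = t) (hστ : ∀ t : ℝ, σ (τ t) = t)
    (hτlip : ∀ x y : ℝ, |τ x - τ y| ≤ L * |x - y|)
    (h hhat : EuclideanSpace ℝ (Fin m)) (h' : EuclideanSpace ℝ (Fin n))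
    (hclose : ‖hhat - h‖ ≤ δ)
    (hlayer : h = toE (fun j => σ (W.mulVec h' j + b j)))
    (htilde : EuclideanSpace ℝ (Fin n))
    (hmin : ∀ u : EuclideanSpace ℝ (Fin n),
      ‖toE (W.mulVec htilde) + toE b - toE (fun j => τ (hhat j))‖
        ≤ ‖toE (W.mulVec u) + toE b - toE (fun j => τ (hhat j))‖) :
    ‖htilde - h'‖ ≤ 2 * L * δ / s :=
  inversion_step_general m n W b s L δ hs hL hW σ τ hτσ hτlip h hhat h' hclose hlayer htilde hmin
end

section
/- For every z ∈ ℝ^k with R‖z − z*‖ ≥ ‖r‖, one has f(z*) − f(z) ≥ (R‖z − z*‖ − ‖r‖)²/β² − ‖r‖²/β² − ‖z − z*‖² − 2‖z − z*‖·‖z*‖. -/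
/-!
The residual at `z` is `(G z - G z*) - r`, whose norm is at least `R‖z - z*‖ - ‖r‖ ≥ 0` by the
lower-Lipschitz bound and the reverse triangle inequality; squaring gives the data-fit term. The prior
term is controlled by `‖z*‖² - ‖z‖² ≤ ‖z - z*‖ (‖z‖ + ‖z*‖) ≤ ‖z - z*‖ (‖z - z*‖ + 2‖z*‖)`.
-/

section SeminormedAddCommGroup

variable {E : Type*} [SeminormedAddCommGroup E]

theorem sq_norm_sub_sq_norm_le (a b : E) :
    ‖b‖ ^ 2 - ‖a‖ ^ 2 ≤ ‖a - b‖ ^ 2 + 2 * ‖a - b‖ * ‖b‖ := by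
  have hdiff : ‖b‖ - ‖a‖ ≤ ‖a - b‖ := by
    rw [norm_sub_rev]
    exact norm_sub_norm_le b a
  have hsum : ‖a‖ ≤ ‖a - b‖ + ‖b‖ := norm_le_norm_sub_add a b
  calc ‖b‖ ^ 2 - ‖a‖ ^ 2 = (‖b‖ - ‖a‖) * (‖a‖ + ‖b‖) := by ring
    _ ≤ ‖a - b‖ * (‖a - b‖ + 2 * ‖b‖) :=
        mul_le_mul hdiff (by linarith) (by positivity) (norm_nonneg _)
    _ = ‖a - b‖ ^ 2 + 2 * ‖a - b‖ * ‖b‖ := by ring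

theorem sq_sub_norm_le_sq_norm_sub (u v : E) {c : ℝ} (hcu : c ≤ ‖u‖) (hvc : ‖v‖ ≤ c) :
    (c - ‖v‖) ^ 2 ≤ ‖u - v‖ ^ 2 :=
  pow_le_pow_left₀ (sub_nonneg.2 hvc) (by linarith [norm_sub_norm_le u v]) 2

end SeminormedAddCommGroup

theorem log_density_drop_general
    (k d : ℕ)
    (G : EuclideanSpace ℝ (Fin k) → EuclideanSpace ℝ (Fin d))
    (R β : ℝ)
    (hG : ∀ z z' : EuclideanSpace ℝ (Fin k), ‖G z - G z'‖ ≥ R * ‖z - z'‖)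
    (zstar : EuclideanSpace ℝ (Fin k)) (r : EuclideanSpace ℝ (Fin d))
    (x : EuclideanSpace ℝ (Fin d)) (hx : x = G zstar + r)
    (f : EuclideanSpace ℝ (Fin k) → ℝ)
    (hf : ∀ z, f z = -‖z‖ ^ 2 - ‖G z - x‖ ^ 2 / β ^ 2)
    (z : EuclideanSpace ℝ (Fin k))
    (hfar : R * ‖z - zstar‖ ≥ ‖r‖) :
    f zstar - f z ≥ (R * ‖z - zstar‖ - ‖r‖) ^ 2 / β ^ 2 - ‖r‖ ^ 2 / β ^ 2
      - ‖z - zstar‖ ^ 2 - 2 * ‖z - zstar‖ * ‖zstar‖ := by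
  subst hx
  have hfit : (R * ‖z - zstar‖ - ‖r‖) ^ 2 / β ^ 2 ≤ ‖G z - (G zstar + r)‖ ^ 2 / β ^ 2 := by
    rw [sub_add_eq_sub_sub]
    exact div_le_div_of_nonneg_right (sq_sub_norm_le_sq_norm_sub _ r (hG z zstar) hfar)
      (sq_nonneg β)
  have hprior := sq_norm_sub_sq_norm_le z zstar
  rw [hf zstar, hf z, sub_add_cancel_left, norm_neg]
  linarith

theorem log_density_drop
    (k d : ℕ)
    (G : EuclideanSpace ℝ (Fin k) → EuclideanSpace ℝ (Fin d))
    (R β : ℝ) (hR : 0 < R) (hβ : 0 < β)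
    (hG : ∀ z z' : EuclideanSpace ℝ (Fin k), ‖G z - G z'‖ ≥ R * ‖z - z'‖)
    (zstar : EuclideanSpace ℝ (Fin k)) (r : EuclideanSpace ℝ (Fin d))
    (x : EuclideanSpace ℝ (Fin d)) (hx : x = G zstar + r)
    (f : EuclideanSpace ℝ (Fin k) → ℝ)
    (hf : ∀ z, f z = -‖z‖ ^ 2 - ‖G z - x‖ ^ 2 / β ^ 2)
    (z : EuclideanSpace ℝ (Fin k))
    (hfar : R * ‖z - zstar‖ ≥ ‖r‖) :
    f zstar - f z ≥ (R * ‖z - zstar‖ - ‖r‖) ^ 2 / β ^ 2 - ‖r‖ ^ 2 / β ^ 2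
      - ‖z - zstar‖ ^ 2 - 2 * ‖z - zstar‖ * ‖zstar‖ :=
  log_density_drop_general k d G R β hG zstar r x hx f hf z hfar
end
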